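/- Let $\partial, \bar\partial$ be anticommuting differentials on a vector space $\Omega$ with $\partial^2 = \bar\partial^2 = 0$ and $\partial\bar\partial = -\bar\partial\partial$. Define the Dolbeault quotient $H_{\bar\partial} = \ker\bar\partial / \mathrm{im}\,\bar\partial$, the Bott-Chern quotient $H_{BC} = (\ker\partial \cap \ker\bar\partial)/\mathrm{im}(\partial\bar\partial)$, and the Aeppli quotient $H_A = \ker(\partial\bar\partial)/(\mathrm{im}\,\partial + \mathrm{im}\,\bar\partial)$. If $H_{\bar\partial}$ is infinite dimensional, then $H_{BC}$ or $H_A$ is infinite dimensional. -/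

import Mathlib

/-!
For `x ∈ ker ∂̄` the class of `x` in the Dolbeault quotient maps to the Aeppli quotient, and it
dies there iff `x ∈ im ∂ + im ∂̄`. By the modular law `(im ∂ + im ∂̄) ∩ ker ∂̄ = (im ∂ ∩ ker ∂̄) + im ∂̄`,
such an `x` is, modulo `im ∂̄`, an element of `ker ∂ ∩ ker ∂̄`, i.e. comes from the Bott-Chern
quotient. So the Dolbeault quotient is an extension of a subspace of the Aeppli quotient by a
quotient of the Bott-Chern one.
-/

theorem isNoetherian_of_ker_le_range {R M N P : Type*} [Ring R] [AddCommGroup M] [Module R M]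
    [AddCommGroup N] [Module R N] [AddCommGroup P] [Module R P] [IsNoetherian R M]
    [IsNoetherian R P] (f : M →ₗ[R] N) (g : N →ₗ[R] P) (h : LinearMap.ker g ≤ LinearMap.range f) :
    IsNoetherian R N :=
  have : IsNoetherian R (LinearMap.ker g) := isNoetherian_of_le h
  isNoetherian_of_range_eq_ker (LinearMap.ker g).subtype g (Submodule.range_subtype _)

namespace Submodule

variable {R M : Type*} [Ring R] [AddCommGroup M] [Module R M]

def subquotientMap {K K' I I' : Submodule R M} (hK : K ≤ K') (hI : I ≤ I') :
    K ⧸ I.comap K.subtype →ₗ[R] K' ⧸ I'.comap K'.subtype :=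
  mapQ _ _ (inclusion hK) fun _ hx ↦ hI hx

theorem ker_subquotientMap_le_range_subquotientMap {K₁ K₂ K₁₂ I₁ I₂ I₁₂ : Submodule R M}
    (hI₁ : I₁ ≤ K₁) (hI₂ : I₂ ≤ K₂) (hK : K₂ ≤ K₁₂) (hI : I₁₂ ≤ I₂) :
    LinearMap.ker (subquotientMap (I' := I₁ ⊔ I₂) hK le_sup_right) ≤
      LinearMap.range (subquotientMap (K := K₁ ⊓ K₂) inf_le_right hI) := by
  intro c hc
  induction c using Quotient.induction_on with | H x => ?_
  have hx : (x : M) ∈ I₂ ⊔ I₁ ⊓ K₂ := by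
    rw [← sup_inf_assoc_of_le I₁ hI₂, sup_comm]
    exact ⟨(Quotient.mk_eq_zero ((I₁ ⊔ I₂).comap K₁₂.subtype) (x := inclusion hK x)).mp hc, x.2⟩
  obtain ⟨z, hz, y, ⟨hy₁, hy₂⟩, hzy⟩ := mem_sup.mp hx
  refine ⟨Quotient.mk ⟨y, hI₁ hy₁, hy₂⟩, (Quotient.eq _).mpr ?_⟩
  change y - x ∈ I₂
  rw [← hzy, sub_add_cancel_right]
  exact neg_mem hz

theorem isNoetherian_subquotient_of_isNoetherian_inf_of_isNoetherian_sup
    {K₁ K₂ K₁₂ I₁ I₂ I₁₂ : Submodule R M}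
    (hI₁ : I₁ ≤ K₁) (hI₂ : I₂ ≤ K₂) (hK : K₂ ≤ K₁₂) (hI : I₁₂ ≤ I₂)
    [IsNoetherian R (↥(K₁ ⊓ K₂) ⧸ I₁₂.comap (K₁ ⊓ K₂).subtype)]
    [IsNoetherian R (K₁₂ ⧸ (I₁ ⊔ I₂).comap K₁₂.subtype)] :
    IsNoetherian R (K₂ ⧸ I₂.comap K₂.subtype) :=
  isNoetherian_of_ker_le_range _ _ (ker_subquotientMap_le_range_subquotientMap hI₁ hI₂ hK hI)

end Submodule

theorem stmt_16 {𝕜 Ω : Type*} [Field 𝕜] [AddCommGroup Ω] [Module 𝕜 Ω]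
    (p q : Ω →ₗ[𝕜] Ω)
    (hp : p ∘ₗ p = 0) (hq : q ∘ₗ q = 0) (hpq : p ∘ₗ q = -(q ∘ₗ p))
    (hinf : ¬ FiniteDimensional 𝕜
      (↥(LinearMap.ker q) ⧸
        ((LinearMap.range q).comap (LinearMap.ker q).subtype))) :
    ¬ FiniteDimensional 𝕜
      (↥(LinearMap.ker p ⊓ LinearMap.ker q) ⧸
        ((LinearMap.range (p ∘ₗ q)).comap (LinearMap.ker p ⊓ LinearMap.ker q).subtype)) ∨
    ¬ FiniteDimensional 𝕜
      (↥(LinearMap.ker (p ∘ₗ q)) ⧸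
        ((LinearMap.range p ⊔ LinearMap.range q).comap (LinearMap.ker (p ∘ₗ q)).subtype)) := by
  by_contra! ⟨hBC, hA⟩
  have hrange_pq : LinearMap.range (p ∘ₗ q) ≤ LinearMap.range q := by
    rw [hpq, LinearMap.range_neg]
    exact LinearMap.range_comp_le_range p q
  have := Submodule.isNoetherian_subquotient_of_isNoetherian_inf_of_isNoetherian_sup
    (LinearMap.range_le_ker_iff.mpr hp) (LinearMap.range_le_ker_iff.mpr hq)
    (LinearMap.ker_le_ker_comp q p) hrange_pq
  exact hinf inferInstance
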